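/- For d ≥ 2, ∫_{[0,1]^{d−1}} [1/(1 − c_1⋯c_{d−1})] dc = ζ(d−1) when d ≥ 3, where ζ is the Riemann zeta function; i.e., the integral of the geometric-series kernel 1/(1−|c|) over the unit cube of dimension d−1 ≥ 2 equals ∑_{n≥1} n^{−(d−1)}. -/

import Mathlib

open Real MeasureTheory

/-!
Expand `1 / (1 - |c|)` as the geometric series `∑ |c| ^ n`. The integral of `|c| ^ n` over the
cube factors into one-dimensional integrals, giving `(n + 1) ^ (-k)` in dimension `k`; for `k ≥ 2`
these are summable, so the integral and the sum may be exchanged.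
-/

theorem integral_Icc_zero_one_pow (n : ℕ) : ∫ x in Set.Icc (0 : ℝ) 1, x ^ n = 1 / (n + 1) := by
  rw [integral_Icc_eq_integral_Ioc, ← intervalIntegral.integral_of_le zero_le_one, integral_pow]
  simp

theorem integral_Icc_zero_one_prod_pow {ι : Type*} [Fintype ι] (n : ℕ) :
    ∫ c in Set.Icc (0 : ι → ℝ) 1, (∏ i, c i) ^ n = (1 / (n + 1 : ℝ)) ^ Fintype.card ι := by
  simp_rw [← Set.pi_univ_Icc, volume_pi, Measure.restrict_pi_pi, ← Finset.prod_pow,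
    integral_fintype_prod_eq_prod (fun _ x => x ^ n), Pi.zero_apply, Pi.one_apply,
    integral_Icc_zero_one_pow, Finset.prod_const, Finset.card_univ]

-- At `x = 1` both sides are junk zeros: `1 / 0 = 0`, and `∑' n, 1 ^ n` diverges.
theorem one_div_one_sub_eq_tsum_pow {x : ℝ} (hx : x ∈ Set.Icc (0 : ℝ) 1) :
    1 / (1 - x) = ∑' n : ℕ, x ^ n := by
  rcases hx.2.lt_or_eq with hx1 | rfl
  · rw [tsum_geometric_of_lt_one hx.1 hx1, one_div]
  · simp [tsum_const]

theorem summable_one_div_nat_add_one_pow {k : ℕ} (hk : 2 ≤ k) :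
    Summable fun n : ℕ => (1 / (n + 1 : ℝ)) ^ k := by
  have := (summable_nat_add_iff 1).mpr (Real.summable_one_div_nat_pow.mpr hk)
  simpa [div_pow] using this

theorem integral_Icc_zero_one_one_div_one_sub_prod {ι : Type*} [Fintype ι]
    (hι : 2 ≤ Fintype.card ι) :
    ∫ c in Set.Icc (0 : ι → ℝ) 1, 1 / (1 - ∏ i, c i)
      = ∑' n : ℕ, (1 : ℝ) / (n + 1) ^ Fintype.card ι := by
  have hprod_mem : ∀ c ∈ Set.Icc (0 : ι → ℝ) 1, ∏ i, c i ∈ Set.Icc (0 : ℝ) 1 := fun c hc =>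
    ⟨Finset.prod_nonneg fun i _ => hc.1 i,
      Finset.prod_le_one (fun i _ => hc.1 i) fun i _ => hc.2 i⟩
  have hint (n : ℕ) : IntegrableOn (fun c : ι → ℝ => (∏ i, c i) ^ n) (Set.Icc 0 1) :=
    (by fun_prop : Continuous fun c : ι → ℝ => (∏ i, c i) ^ n).continuousOn.integrableOn_compact
      isCompact_Icc
  have hnorm (n : ℕ) : ∫ c in Set.Icc (0 : ι → ℝ) 1, ‖(∏ i, c i) ^ n‖
      = (1 / (n + 1 : ℝ)) ^ Fintype.card ι := by
    rw [← integral_Icc_zero_one_prod_pow]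
    refine setIntegral_congr_fun measurableSet_Icc fun c hc => ?_
    exact Real.norm_of_nonneg (pow_nonneg (hprod_mem c hc).1 n)
  calc ∫ c in Set.Icc (0 : ι → ℝ) 1, 1 / (1 - ∏ i, c i)
      = ∫ c in Set.Icc (0 : ι → ℝ) 1, ∑' n : ℕ, (∏ i, c i) ^ n :=
        setIntegral_congr_fun measurableSet_Icc fun c hc =>
          one_div_one_sub_eq_tsum_pow (hprod_mem c hc)
    _ = ∑' n : ℕ, ∫ c in Set.Icc (0 : ι → ℝ) 1, (∏ i, c i) ^ n :=
        (integral_tsum_of_summable_integral_norm hint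
          (by simpa only [hnorm] using summable_one_div_nat_add_one_pow hι)).symm
    _ = ∑' n : ℕ, (1 : ℝ) / (n + 1) ^ Fintype.card ι := by
        simp_rw [integral_Icc_zero_one_prod_pow, div_pow, one_pow]

theorem stmt9 (d : ℕ) (hd : 3 ≤ d) :
    ∫ c in Set.Icc (0 : Fin (d - 1) → ℝ) 1, 1 / (1 - ∏ i, c i)
      = ∑' n : ℕ, (1 : ℝ) / (n + 1) ^ (d - 1) := by
  simpa only [Fintype.card_fin] using
    integral_Icc_zero_one_one_div_one_sub_prod (ι := Fin (d - 1)) (by rw [Fintype.card_fin]; omega)
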